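/- Every empty 6-pair whose two spanning faces f_e, f_e' neighbour 6 pairwise different faces has exactly 6 vertices and at least 12 edges. -/
import Mathlib


/-- A combinatorial map (connected graph cellularly embedded in an orientable surface),
given by a set of darts `D`, the edge involution `σ` and the rotation `ρ`. -/
structure CombMap where
  D : Type
  fin : Finite D
  σ : Equiv.Perm D
  ρ : Equiv.Perm D
  σ_invol : ∀ d, σ (σ d) = d
  σ_fixfree : ∀ d, σ d ≠ d
  conn : ∀ d d' : D, ∃ g ∈ Subgroup.closure ({σ, ρ} : Set (Equiv.Perm D)), g d = d'

attribute [instance] CombMap.fin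

namespace CombMap

variable (M : CombMap)

/-- The face permutation. -/
def φ : Equiv.Perm M.D := M.ρ * M.σ

def vSetoid : Setoid M.D :=
  ⟨M.ρ.SameCycle, ⟨fun _ => Equiv.Perm.SameCycle.refl _ _,
    Equiv.Perm.SameCycle.symm, Equiv.Perm.SameCycle.trans⟩⟩

def eSetoid : Setoid M.D :=
  ⟨M.σ.SameCycle, ⟨fun _ => Equiv.Perm.SameCycle.refl _ _,
    Equiv.Perm.SameCycle.symm, Equiv.Perm.SameCycle.trans⟩⟩

def fSetoid : Setoid M.D :=
  ⟨M.φ.SameCycle, ⟨fun _ => Equiv.Perm.SameCycle.refl _ _,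
    Equiv.Perm.SameCycle.symm, Equiv.Perm.SameCycle.trans⟩⟩

/-- Vertices are orbits of `ρ`. -/
def Vertex := Quotient M.vSetoid
/-- Edges are orbits of `σ`. -/
def Edge := Quotient M.eSetoid
/-- Faces are orbits of `φ`. -/
def Face := Quotient M.fSetoid

instance : Finite M.Vertex := Quotient.finite _
instance : Finite M.Edge := Quotient.finite _
instance : Finite M.Face := Quotient.finite _

def vtx (d : M.D) : M.Vertex := Quotient.mk M.vSetoid d
def edg (d : M.D) : M.Edge := Quotient.mk M.eSetoid d
def fce (d : M.D) : M.Face := Quotient.mk M.fSetoid d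

noncomputable def nV : ℕ := Nat.card M.Vertex
noncomputable def nE : ℕ := Nat.card M.Edge
noncomputable def nF : ℕ := Nat.card M.Face

/-- The size of a face: the length of its facial walk, i.e. the number of darts in it. -/
noncomputable def faceSize (f : M.Face) : ℕ := Nat.card {d : M.D // M.fce d = f}

/-- The degree of a vertex: the number of darts emanating from it. -/
noncomputable def degree (v : M.Vertex) : ℕ := Nat.card {d : M.D // M.vtx d = v}

/-- The face excess `Σ_f (d(f) - 3)`. -/
noncomputable def faceExcess : ℤ := ∑ᶠ f : M.Face, ((M.faceSize f : ℤ) - 3)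

/-- The underlying graph of the map is simple: no loops, no multiple edges. -/
def Simple : Prop :=
  (∀ d, M.vtx d ≠ M.vtx (M.σ d)) ∧
  ∀ d d', M.vtx d = M.vtx d' → M.vtx (M.σ d) = M.vtx (M.σ d') → M.edg d = M.edg d'

/-- The dual has no loops. -/
def DualLoopFree : Prop := ∀ d, M.fce d ≠ M.fce (M.σ d)

/-- The dual is simple: no loops and no multiple edges. -/
def DualSimple : Prop :=
  M.DualLoopFree ∧
  ∀ d d', M.fce d = M.fce d' → M.fce (M.σ d) = M.fce (M.σ d') → M.edg d = M.edg d'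

/-- The underlying simple graph on the vertices of the map. -/
def graph : SimpleGraph M.Vertex :=
  SimpleGraph.fromRel (fun a b => ∃ d, M.vtx d = a ∧ M.vtx (M.σ d) = b)

/-- The underlying simple graph of the dual map, on the faces of the map. -/
def dualGraph : SimpleGraph M.Face :=
  SimpleGraph.fromRel (fun a b => ∃ d, M.fce d = a ∧ M.fce (M.σ d) = b)

/-- Vertex `v` lies on the face `f`. -/
def VertexOnFace (v : M.Vertex) (f : M.Face) : Prop := ∃ d, M.fce d = f ∧ M.vtx d = v

/-- Faces `f` and `f'` share an edge. -/
def FaceAdj (f f' : M.Face) : Prop := ∃ d, M.fce d = f ∧ M.fce (M.σ d) = f'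

end CombMap

/-- `k`-connectivity of a graph: more than `k` vertices, and removing fewer than `k`
vertices never disconnects it. -/
def KConn {α : Type} (H : SimpleGraph α) (k : ℕ) : Prop :=
  k < Nat.card α ∧ ∀ S : Set α, S.ncard < k → (H.induce Sᶜ).Connected

namespace CombMap

variable (M : CombMap)

/-- An empty `k`-circuit: a map on at most `k` vertices with a spanning face `f_e` of
size `k`, whose underlying graph is simple, whose dual has no loops, and all of whose
dual multi-edges are incident with `f_e`. -/
def IsEmptyCircuit (k : ℕ) (fe : M.Face) : Prop :=
  M.nV ≤ k ∧ M.faceSize fe = k ∧ (∀ v : M.Vertex, M.VertexOnFace v fe) ∧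
  M.Simple ∧ M.DualLoopFree ∧
  ∀ d d', M.fce d = M.fce d' → M.fce (M.σ d) = M.fce (M.σ d') → M.edg d ≠ M.edg d' →
    (M.fce d = fe ∨ M.fce (M.σ d) = fe)

/-- An empty `k`-pair: a map on at most `k` vertices with two spanning faces
`f_e, f_e'` with `d(f_e)+d(f_e') = k` not sharing an edge, whose underlying graph is
simple, whose dual has no loops, and all of whose dual multi-edges are incident with
`f_e` or `f_e'`. -/
def IsEmptyPair (k : ℕ) (fe fe' : M.Face) : Prop :=
  M.nV ≤ k ∧ fe ≠ fe' ∧ M.faceSize fe + M.faceSize fe' = k ∧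
  (∀ v : M.Vertex, M.VertexOnFace v fe ∨ M.VertexOnFace v fe') ∧
  ¬ M.FaceAdj fe fe' ∧
  M.Simple ∧ M.DualLoopFree ∧
  ∀ d d', M.fce d = M.fce d' → M.fce (M.σ d) = M.fce (M.σ d') → M.edg d ≠ M.edg d' →
    (M.fce d = fe ∨ M.fce d = fe' ∨ M.fce (M.σ d) = fe ∨ M.fce (M.σ d) = fe')

end CombMap


namespace CombMap

variable (M : CombMap)

lemma sigma_sq : M.σ ^ (2 : ℤ) = 1 := by
  have h : M.σ * M.σ = 1 := by
    ext x
    simp [M.σ_invol x]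
  rw [show (2 : ℤ) = 1 + 1 by norm_num, zpow_add, zpow_one]
  exact h

lemma sameCycle_sigma {d d' : M.D} (h : M.σ.SameCycle d d') :
    d' = d ∨ d' = M.σ d := by
  obtain ⟨i, hi⟩ := h
  rcases Int.even_or_odd i with ⟨k, hk⟩ | ⟨k, hk⟩
  · left
    have hpow : M.σ ^ i = 1 := by
      rw [hk, show k + k = 2 * k by ring, zpow_mul, M.sigma_sq, one_zpow]
    rw [hpow] at hi
    simpa using hi.symm
  · right
    have hpow : M.σ ^ i = M.σ := by
      rw [hk, zpow_add, zpow_mul, M.sigma_sq, one_zpow, one_mul, zpow_one]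
    rw [hpow] at hi
    exact hi.symm

lemma fce_phi (d : M.D) : M.fce (M.φ d) = M.fce d :=
  (Quotient.sound (s := M.fSetoid) (⟨1, by simp⟩ : M.φ.SameCycle d (M.φ d))).symm

lemma vtx_sigma_eq_vtx_phi (x : M.D) : M.vtx (M.σ x) = M.vtx (M.φ x) :=
  Quotient.sound ⟨1, by simp [CombMap.φ]⟩

lemma edg_sigma (d : M.D) : M.edg (M.σ d) = M.edg d :=
  Quotient.sound ⟨1, by simpa using M.σ_invol d⟩

lemma faceAdj_symm {f g : M.Face} (h : M.FaceAdj f g) : M.FaceAdj g f := by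
  obtain ⟨d, h1, h2⟩ := h
  refine ⟨M.σ d, h2, ?_⟩
  rw [M.σ_invol]
  exact h1

lemma not_faceAdj_self (hD : M.DualLoopFree) (f : M.Face) : ¬ M.FaceAdj f f := by
  rintro ⟨d, h1, h2⟩
  exact hD d (h1.trans h2.symm)

lemma three_le_card_aux {α : Type} [Finite α] (a b c : α)
    (hab : a ≠ b) (hac : a ≠ c) (hbc : b ≠ c) : 3 ≤ Nat.card α := by
  classical
  haveI := Fintype.ofFinite α
  rw [Nat.card_eq_fintype_card]
  have h3 : ({a, b, c} : Finset α).card = 3 := by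
    rw [Finset.card_insert_of_notMem (by simp [hab, hac]),
      Finset.card_insert_of_notMem (by simp [hbc]), Finset.card_singleton]
  calc 3 = ({a, b, c} : Finset α).card := h3.symm
    _ ≤ _ := Finset.card_le_univ _

lemma three_le_faceSize (hS : M.Simple) (hD : M.DualLoopFree) (f : M.Face) :
    3 ≤ M.faceSize f := by
  obtain ⟨d, rfl⟩ := Quotient.exists_rep f
  have h1 : M.φ d ≠ d := by
    intro h
    apply hS.1 d
    have h2 := M.vtx_sigma_eq_vtx_phi d
    rw [h] at h2
    exact h2.symm
  have h2 : M.φ (M.φ d) ≠ d := by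
    intro h
    have e1 : M.vtx d = M.vtx (M.σ (M.φ d)) := by
      have := M.vtx_sigma_eq_vtx_phi (M.φ d)
      rw [h] at this
      exact this.symm
    have e2 : M.vtx (M.σ d) = M.vtx (M.σ (M.σ (M.φ d))) := by
      rw [M.σ_invol]
      exact M.vtx_sigma_eq_vtx_phi d
    have hedg := hS.2 d (M.σ (M.φ d)) e1 e2
    have hsc : M.σ.SameCycle d (M.σ (M.φ d)) := Quotient.exact hedg
    rcases M.sameCycle_sigma hsc with h' | h'
    · have hps : M.φ d = M.σ d := by
        have := congrArg M.σ h'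
        rwa [M.σ_invol] at this
      apply hD d
      rw [← hps]
      exact (M.fce_phi d).symm
    · have hpd : M.φ d = d := by
        have := congrArg M.σ h'
        rwa [M.σ_invol, M.σ_invol] at this
      exact h1 hpd
  have h3 : M.φ d ≠ M.φ (M.φ d) := fun h => h1 (M.φ.injective h).symm
  apply three_le_card_aux
    (⟨d, rfl⟩ : {x : M.D // M.fce x = Quotient.mk M.fSetoid d})
    ⟨M.φ d, M.fce_phi d⟩ ⟨M.φ (M.φ d), by rw [M.fce_phi, M.fce_phi]; exact rfl⟩
  · exact fun h => h1 (congrArg Subtype.val h).symm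
  · exact fun h => h2 (congrArg Subtype.val h).symm
  · exact fun h => h3 (congrArg Subtype.val h)

lemma card_edg_fiber (e : M.Edge) : Nat.card {d : M.D // M.edg d = e} = 2 := by
  obtain ⟨d, rfl⟩ := Quotient.exists_rep e
  rw [Nat.card_eq_two_iff]
  refine ⟨⟨d, rfl⟩, ⟨M.σ d, M.edg_sigma d⟩, ?_, ?_⟩
  · exact fun h => M.σ_fixfree d ((congrArg Subtype.val h).symm)
  · ext z
    obtain ⟨z, hz⟩ := z
    simp only [Set.mem_insert_iff, Set.mem_singleton_iff, Set.mem_univ, iff_true]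
    have hsc : M.σ.SameCycle z d := Quotient.exact hz
    rcases M.sameCycle_sigma hsc with h' | h'
    · left; exact Subtype.ext h'.symm
    · right
      apply Subtype.ext
      show z = M.σ d
      have h2 := congrArg M.σ h'
      rw [M.σ_invol] at h2
      exact h2.symm

end CombMap

/-- Every empty 6-pair whose spanning faces `f_e, f_e'` neighbour 6 pairwise
different faces has exactly 6 vertices and at least 12 edges. -/
theorem empty_six_pair_vertices_edges
    (M : CombMap) (fe fe' : M.Face)
    (hpair : M.IsEmptyPair 6 fe fe')
    (hnbrs : Nat.card {f : M.Face // M.FaceAdj fe f ∨ M.FaceAdj fe' f} = 6) :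
    M.nV = 6 ∧ 12 ≤ M.nE := by
  obtain ⟨hV6, hne, _hsum, _hspan, hnadj, hS, hD, _hmulti⟩ := hpair
  classical
  haveI : Fintype M.D := Fintype.ofFinite _
  haveI : Fintype M.Face := Fintype.ofFinite _
  haveI : Fintype M.Edge := Fintype.ofFinite _
  haveI : Fintype M.Vertex := Fintype.ofFinite _
  -- # of faces is at least 8
  have hF8 : 8 ≤ Fintype.card M.Face := by
    rw [Nat.card_eq_fintype_card] at hnbrs
    have hinj : Function.Injective
        (Sum.elim (Subtype.val : {f : M.Face // M.FaceAdj fe f ∨ M.FaceAdj fe' f} → M.Face)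
          (fun i : Fin 2 => if i = 0 then fe else fe')) := by
      have hval : ∀ a : {f : M.Face // M.FaceAdj fe f ∨ M.FaceAdj fe' f},
          a.1 ≠ fe ∧ a.1 ≠ fe' := by
        intro a
        rcases a.2 with ha | ha
        · refine ⟨fun hfe => ?_, fun hfe => ?_⟩
          · rw [hfe] at ha; exact M.not_faceAdj_self hD fe ha
          · rw [hfe] at ha; exact hnadj ha
        · refine ⟨fun hfe => ?_, fun hfe => ?_⟩
          · rw [hfe] at ha; exact hnadj (M.faceAdj_symm ha)
          · rw [hfe] at ha; exact M.not_faceAdj_self hD fe' ha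
      rintro (a | i) (b | j) h
      · simp only [Sum.elim_inl] at h
        rw [Subtype.ext h]
      · exfalso
        simp only [Sum.elim_inl, Sum.elim_inr] at h
        rcases (hval a) with ⟨h1, h2⟩
        by_cases hj : j = 0
        · rw [if_pos hj] at h; exact h1 h
        · rw [if_neg hj] at h; exact h2 h
      · exfalso
        simp only [Sum.elim_inl, Sum.elim_inr] at h
        rcases (hval b) with ⟨h1, h2⟩
        by_cases hi : i = 0
        · rw [if_pos hi] at h; exact h1 h.symm
        · rw [if_neg hi] at h; exact h2 h.symm
      · simp only [Sum.elim_inr] at h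
        fin_cases i <;> fin_cases j <;> simp_all
    have := Fintype.card_le_of_injective _ hinj
    rwa [Fintype.card_sum, hnbrs, Fintype.card_fin] at this
  -- total dart count via faces
  have hDsum : Fintype.card M.D = ∑ f : M.Face, Fintype.card {d : M.D // M.fce d = f} := by
    rw [← Fintype.card_sigma]
    exact (Fintype.card_congr (Equiv.sigmaFiberEquiv M.fce)).symm
  have hD24 : 24 ≤ Fintype.card M.D := by
    rw [hDsum]
    have hle : (Finset.univ : Finset M.Face).card • 3 ≤
        ∑ f : M.Face, Fintype.card {d : M.D // M.fce d = f} := by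
      apply Finset.card_nsmul_le_sum
      intro f _
      have := M.three_le_faceSize hS hD f
      rwa [CombMap.faceSize, Nat.card_eq_fintype_card] at this
    refine le_trans ?_ hle
    rw [Finset.card_univ, smul_eq_mul]
    omega
  -- total dart count via edges
  have hDedge : Fintype.card M.D = 2 * Fintype.card M.Edge := by
    have h1 : Fintype.card M.D = ∑ e : M.Edge, Fintype.card {d : M.D // M.edg d = e} := by
      rw [← Fintype.card_sigma]
      exact (Fintype.card_congr (Equiv.sigmaFiberEquiv M.edg)).symm
    rw [h1]
    have h2 : ∀ e : M.Edge, Fintype.card {d : M.D // M.edg d = e} = 2 := by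
      intro e
      have := M.card_edg_fiber e
      rwa [Nat.card_eq_fintype_card] at this
    rw [Finset.sum_congr rfl (fun e _ => h2 e), Finset.sum_const, Finset.card_univ,
      smul_eq_mul, mul_comm]
  -- dart count at most nV * nV - nV
  have hDvtx : Fintype.card M.D + Fintype.card M.Vertex
      ≤ Fintype.card M.Vertex * Fintype.card M.Vertex := by
    have hinj : Function.Injective
        (fun d : M.D => (⟨(M.vtx d, M.vtx (M.σ d)), hS.1 d⟩ :
          {p : M.Vertex × M.Vertex // p.1 ≠ p.2})) := by
      intro x y h
      have h1 : M.vtx x = M.vtx y := congrArg (fun z => z.1.1) h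
      have h2 : M.vtx (M.σ x) = M.vtx (M.σ y) := congrArg (fun z => z.1.2) h
      have hedg := hS.2 x y h1 h2
      have hsc : M.σ.SameCycle x y := Quotient.exact hedg
      rcases M.sameCycle_sigma hsc with h' | h'
      · exact h'.symm
      · exfalso
        apply hS.1 x
        rw [h1, h']
    have hcard := Fintype.card_le_of_injective _ hinj
    have hcompl : Fintype.card {p : M.Vertex × M.Vertex // ¬ (p.1 = p.2)} =
        Fintype.card (M.Vertex × M.Vertex) - Fintype.card {p : M.Vertex × M.Vertex // p.1 = p.2} :=
      Fintype.card_subtype_compl _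
    have hdiag : Fintype.card {p : M.Vertex × M.Vertex // p.1 = p.2} = Fintype.card M.Vertex := by
      apply Fintype.card_congr
      exact ⟨fun x => x.1.1, fun v => ⟨(v, v), rfl⟩,
        fun x => by obtain ⟨⟨a, b⟩, h⟩ := x; cases h; rfl, fun v => rfl⟩
    have hdle : Fintype.card {p : M.Vertex × M.Vertex // p.1 = p.2}
        ≤ Fintype.card (M.Vertex × M.Vertex) := Fintype.card_le_of_injective _ Subtype.val_injective
    rw [hcompl, hdiag] at hcard
    rw [hdiag] at hdle
    rw [Fintype.card_prod] at *
    omega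
  -- conclusions
  have hnE : M.nE = Fintype.card M.Edge := Nat.card_eq_fintype_card
  have hnV : M.nV = Fintype.card M.Vertex := Nat.card_eq_fintype_card
  rw [hnV] at hV6
  rw [hnE, hnV]
  constructor
  · have h1 : 24 + Fintype.card M.Vertex
        ≤ Fintype.card M.Vertex * Fintype.card M.Vertex := le_trans (by omega) hDvtx
    rcases Nat.lt_or_ge (Fintype.card M.Vertex) 6 with hlt | hge
    · exfalso
      have hmul : Fintype.card M.Vertex * Fintype.card M.Vertex
          ≤ 5 * Fintype.card M.Vertex := Nat.mul_le_mul_right _ (by omega)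
      have h2 := le_trans h1 hmul
      omega
    · omega
  · omega
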